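/- arXiv:2403.08415 — 2 statements merged into one kernel-verified Lean document; each statement's English description precedes it below -/
import Mathlib

section
/- For every n ≥ 1, every word d₁…d_n ∈ Ω_{σ₁…σ_n}, and every a ∈ ℝ, writing (x₁,y₁) = Φ^{σ₁…σ_n}_{d₁…d_n}(0,1) and (x₂,y₂) = Φ^{σ₁…σ_n}_{d₁…d_n}(1,0), one has y₂ − (M/N)x₂ = S^{σ₁…σ_n}_{d₁…d_n}(−M/N), y₁ − (M/N)x₁ = S^{σ₁…σ_n}_{d₁…d_n}(1), and Φ^{σ₁…σ_n}_{d₁…d_n}(F₀) ∩ L_a ≠ ∅ if and only if a ∈ S^{σ₁…σ_n}_{d₁…d_n}(J) = [y₂−(M/N)x₂, y₁−(M/N)x₁]. -/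
open Set Filter

noncomputable section

/-- The digit set Ω₀. -/
def Dig0 : Finset (ℤ × ℤ) := {(0,0),(0,1),(0,2),(1,0),(1,2),(2,0),(2,1),(2,2)}

/-- The digit set Ω₁. -/
def Dig1 : Finset (ℤ × ℤ) :=
  {(0,0),(0,1),(0,2),(0,3),(1,0),(1,3),(2,0),(2,1),(3,0),(3,1),(3,2),(3,3)}

/-- Ω indexed by a boolean (false = Ω₀, true = Ω₁). -/
def DigB : Bool → Finset (ℤ × ℤ)
  | false => Dig0
  | true => Dig1

/-- The contraction ratio denominator: 3 for the 0-system, 4 for the 1-system. -/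
def ratioB : Bool → ℝ
  | false => 3
  | true => 4

/-- Maximal digit for the symbolic space: 2 when σ_i = 0, 3 when σ_i = 1. -/
def capB : Bool → ℕ
  | false => 2
  | true => 3

/-- The maps Φ⁰_d (b = false) and Φ¹_d (b = true). -/
def Phi (b : Bool) (d : ℤ × ℤ) (p : ℝ × ℝ) : ℝ × ℝ :=
  ((p.1 + (d.1 : ℝ)) / ratioB b, (p.2 + (d.2 : ℝ)) / ratioB b)

/-- `cnt σ b k` = number of indices among the first k with σ-value b (i.e. n₀(k), n₁(k)). -/
def cnt (σ : ℕ → Bool) (b : Bool) (k : ℕ) : ℕ :=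
  ((Finset.range k).filter (fun i => σ i = b)).card

/-- The scale 3^{n₀(k)}·4^{n₁(k)}. -/
def sc (σ : ℕ → Bool) (k : ℕ) : ℝ := 3 ^ cnt σ false k * 4 ^ cnt σ true k

/-- The unit square F₀ = [0,1]². -/
def F0set : Set (ℝ × ℝ) := Set.Icc (0:ℝ) 1 ×ˢ Set.Icc (0:ℝ) 1

/-- The sets F_j of the Moran construction (σ j is the paper's σ_{j+1}). -/
def Fiter (σ : ℕ → Bool) : ℕ → Set (ℝ × ℝ)
  | 0 => F0set
  | j + 1 => ⋃ d ∈ DigB (σ j), Phi (σ j) d '' Fiter σ j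

/-- The Sierpinski carpet with Moran structure F_σ = ⋂_{j ≥ 1} F_j. -/
def FMoran (σ : ℕ → Bool) : Set (ℝ × ℝ) := ⋂ j : ℕ, Fiter σ (j + 1)

/-- The line L_a : y = (M/N)x + a. -/
def Lline (M N : ℕ) (a : ℝ) : Set (ℝ × ℝ) := {p | p.2 = (M : ℝ) / (N : ℝ) * p.1 + a}

/-- The interval J = [-M/N, 1]. -/
def Jset (M N : ℕ) : Set ℝ := Set.Icc (-(M : ℝ) / (N : ℝ)) 1

/-- The expanding maps T⁰_d (b = false) and T¹_d (b = true). -/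
def Tmap (M N : ℕ) (b : Bool) (d : ℤ × ℤ) (x : ℝ) : ℝ :=
  ratioB b * x + (d.1 : ℝ) * ((M : ℝ) / (N : ℝ)) - (d.2 : ℝ)

/-- The contracting maps S⁰_d (b = false) and S¹_d (b = true), inverses of T. -/
def Smap (M N : ℕ) (b : Bool) (d : ℤ × ℤ) (x : ℝ) : ℝ :=
  (x - (d.1 : ℝ) * ((M : ℝ) / (N : ℝ)) + (d.2 : ℝ)) / ratioB b

/-- Composition Φ^{σ₁…σ_n}_{d₁…d_n} = Φ^{σ₁}_{d₁} ∘ ⋯ ∘ Φ^{σ_n}_{d_n}. -/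
def PhiComp (σ : ℕ → Bool) {n : ℕ} (w : Fin n → ℤ × ℤ) : ℝ × ℝ → ℝ × ℝ :=
  (List.ofFn (fun i : Fin n => Phi (σ i.1) (w i))).foldr (· ∘ ·) id

/-- Composition S^{σ₁…σ_n}_{d₁…d_n} = S^{σ₁}_{d₁} ∘ ⋯ ∘ S^{σ_n}_{d_n}. -/
def Scomp (M N : ℕ) (σ : ℕ → Bool) {n : ℕ} (w : Fin n → ℤ × ℤ) : ℝ → ℝ :=
  (List.ofFn (fun i : Fin n => Smap M N (σ i.1) (w i))).foldr (· ∘ ·) id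

/-- Composition T^{σ₁…σ_n}_{d₁…d_n} = T^{σ_n}_{d_n} ∘ ⋯ ∘ T^{σ₁}_{d₁}. -/
def Tcomp (M N : ℕ) (σ : ℕ → Bool) {n : ℕ} (w : Fin n → ℤ × ℤ) : ℝ → ℝ :=
  (List.ofFn (fun i : Fin n => Tmap M N (σ i.1) (w i))).foldl (fun g f => f ∘ g) id

/-- N_n^σ(a): the number of admissible words of length n whose level-n square meets L_a. -/
def Ncount (M N : ℕ) (σ : ℕ → Bool) (n : ℕ) (a : ℝ) : ℕ :=
  Set.ncard {w : Fin n → ℤ × ℤ |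
    (∀ i, w i ∈ DigB (σ i.1)) ∧ (PhiComp σ w '' F0set ∩ Lline M N a).Nonempty}

/-- Γ_x = {x + i/N : i ∈ ℤ} ∩ J. -/
def GammaSet (M N : ℕ) (x : ℝ) : Set ℝ :=
  {y | (∃ i : ℤ, y = x + (i : ℝ) / (N : ℝ)) ∧ y ∈ Jset M N}

/-- The matrix A₀^j (1-based indices p, q correspond to the Fin values plus one). -/
def A0mat (M N : ℕ) (j : ℕ) : Matrix (Fin (N + M)) (Fin (N + M)) ℝ :=
  Matrix.of fun p q =>
    ((Dig0.filter (fun d => d.1 * (M : ℤ) - d.2 * (N : ℤ) =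
        2 * (M : ℤ) + 2 + ((q : ℕ) + 1 : ℤ) - 3 * ((p : ℕ) + 1 : ℤ) - (j : ℤ))).card : ℝ)

/-- The matrix A₁^j. -/
def A1mat (M N : ℕ) (j : ℕ) : Matrix (Fin (N + M)) (Fin (N + M)) ℝ :=
  Matrix.of fun p q =>
    ((Dig1.filter (fun d => d.1 * (M : ℤ) - d.2 * (N : ℤ) =
        3 * (M : ℤ) + 3 + ((q : ℕ) + 1 : ℤ) - 4 * ((p : ℕ) + 1 : ℤ) - (j : ℤ))).card : ℝ)

/-- A^j_b : A₀^j when b = false, A₁^j when b = true. -/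
def Amat (M N : ℕ) : Bool → ℕ → Matrix (Fin (N + M)) (Fin (N + M)) ℝ
  | false => A0mat M N
  | true => A1mat M N

/-- The ordered matrix product A^{ξ₁}_{σ₁} A^{ξ₂}_{σ₂} ⋯ A^{ξ_k}_{σ_k}. -/
def Aprod (M N : ℕ) (σ : ℕ → Bool) (ξ : ℕ → ℕ) (k : ℕ) :
    Matrix (Fin (N + M)) (Fin (N + M)) ℝ :=
  ((List.range k).map (fun i => Amat M N (σ i) (ξ i))).prod

/-- The matrix B_b(x), built from a chosen increasing enumeration Γe of the sets Γ_x. -/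
def Bmat (M N : ℕ) (Γe : ℝ → Fin (N + M) → ℝ) (b : Bool) (x : ℝ) :
    Matrix (Fin (N + M)) (Fin (N + M)) ℝ :=
  Matrix.of fun p q =>
    (Set.ncard {d : ℤ × ℤ | d ∈ DigB b ∧ Tmap M N b d (Γe x p) = Γe (ratioB b * x) q} : ℝ)

/-- ‖X‖: the sum of all entries of a matrix. -/
def mnorm {n : ℕ} (X : Matrix (Fin n) (Fin n) ℝ) : ℝ := ∑ p, ∑ q, X p q

/-- The least number of sets of diameter at most δ needed to cover E. -/
def coverNum (E : Set (ℝ × ℝ)) (δ : ℝ) : ℕ :=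
  sInf {n : ℕ | ∃ S : Finset (Set (ℝ × ℝ)), S.card = n ∧
    (∀ s ∈ S, EMetric.diam s ≤ ENNReal.ofReal δ) ∧ E ⊆ ⋃ s ∈ S, s}

/-- The upper box dimension. -/
def uboxDim (E : Set (ℝ × ℝ)) : ℝ :=
  limsup (fun δ : ℝ => Real.log (coverNum E δ : ℝ) / (-Real.log δ))
    (nhdsWithin (0 : ℝ) (Set.Ioi 0))

/-- The lower box dimension. -/
def lboxDim (E : Set (ℝ × ℝ)) : ℝ :=
  liminf (fun δ : ℝ => Real.log (coverNum E δ : ℝ) / (-Real.log δ))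
    (nhdsWithin (0 : ℝ) (Set.Ioi 0))

/-- The finite words Σ_σ^k. -/
def wordsF (σ : ℕ → Bool) (k : ℕ) : Finset (Fin k → ℕ) :=
  Fintype.piFinset fun i => Finset.range (capB (σ i.1) + 1)

/-- A_ω for a finite word ω ∈ Σ_σ^k. -/
def AprodW (M N : ℕ) (σ : ℕ → Bool) {k : ℕ} (ω : Fin k → ℕ) :
    Matrix (Fin (N + M)) (Fin (N + M)) ℝ :=
  (List.ofFn (fun i : Fin k => Amat M N (σ i.1) (ω i))).prod

/-- The pressure function P_A(q). -/
def PA (M N : ℕ) (σ : ℕ → Bool) (q : ℝ) : ℝ :=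
  limsup (fun k : ℕ =>
    Real.log (∑ ω ∈ wordsF σ k, mnorm (AprodW M N σ ω) ^ q) / (k : ℝ)) atTop

/-- The level set E(α) of intercepts whose box-dimension limit equals α. -/
def Eset (M N : ℕ) (σ : ℕ → Bool) (α : ℝ) : Set ℝ :=
  {a | a ∈ Jset M N ∧ (∀ k : ℕ, ¬∃ m : ℤ, sc σ k * (N : ℝ) * a = (m : ℝ)) ∧
    ∃ κ : ℕ, (1 ≤ κ ∧ κ ≤ N + M) ∧ ∃ ξ : ℕ → ℕ, (∀ i, ξ i ≤ capB (σ i)) ∧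
      a = (-(M : ℝ) - 1 + (κ : ℝ)) / (N : ℝ) +
          1 / (N : ℝ) * ∑' i : ℕ, (ξ i : ℝ) / sc σ (i + 1) ∧
      Tendsto (fun k : ℕ => Real.log (mnorm (Aprod M N σ ξ k)) /
        ((cnt σ false k : ℝ) * Real.log 3 + (cnt σ true k : ℝ) * Real.log 4))
        atTop (nhds α)}

/-! The intercept map `p ↦ p.2 - (M/N) p.1`, which sends exactly the points of `L_a` to `a`,
semiconjugates each `Φ_d` to `S_d`, hence `Φ_w` to `S_w`. It maps `F₀` onto `J`, so the level-`n`
square `Φ_w(F₀)` meets `L_a` iff `a ∈ S_w(J)`; and `S_w`, a continuous increasing map, sends `J`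
onto the interval between the images of its endpoints, which are the intercepts of the corners
`Φ_w(1,0)` and `Φ_w(0,1)`. -/

open Function

theorem List.semiconj_foldr_comp_ofFn {α β : Type*} {π : α → β} :
    ∀ {n : ℕ} (F : Fin n → α → α) (G : Fin n → β → β), (∀ i, Semiconj π (F i) (G i)) →
      Semiconj π ((List.ofFn F).foldr (· ∘ ·) id) ((List.ofFn G).foldr (· ∘ ·) id)
  | 0, _, _, _ => Semiconj.id_right
  | _ + 1, F, G, h => by
    simpa only [List.ofFn_succ, List.foldr_cons] using
      (h 0).comp_right (semiconj_foldr_comp_ofFn _ _ fun i => h i.succ)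

theorem List.foldr_comp_ofFn_induction {α : Type*} (P : (α → α) → Prop) (h_id : P id)
    (h_comp : ∀ f g, P f → P g → P (f ∘ g)) :
    ∀ {n : ℕ} (F : Fin n → α → α), (∀ i, P (F i)) → P ((List.ofFn F).foldr (· ∘ ·) id)
  | 0, _, _ => h_id
  | _ + 1, F, h => by
    simpa only [List.ofFn_succ, List.foldr_cons] using
      h_comp _ _ (h 0) (foldr_comp_ofFn_induction P h_id h_comp _ fun i => h i.succ)

theorem ratioB_pos (b : Bool) : 0 < ratioB b := by cases b <;> norm_num [ratioB]

def intercept (M N : ℕ) (p : ℝ × ℝ) : ℝ := p.2 - (M : ℝ) / N * p.1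

theorem mem_Lline_iff {M N : ℕ} {a : ℝ} {p : ℝ × ℝ} :
    p ∈ Lline M N a ↔ intercept M N p = a := by
  simp only [Lline, intercept, Set.mem_ofPred_eq]
  constructor <;> intro h <;> linarith

theorem inter_Lline_nonempty_iff {M N : ℕ} {a : ℝ} {s : Set (ℝ × ℝ)} :
    (s ∩ Lline M N a).Nonempty ↔ a ∈ intercept M N '' s := by
  simp only [Set.Nonempty, Set.mem_inter_iff, mem_Lline_iff, Set.mem_image]

theorem intercept_image_F0set (M N : ℕ) : intercept M N '' F0set = Jset M N := by
  have hm : (0 : ℝ) ≤ (M : ℝ) / N := by positivity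
  ext t
  constructor
  · rintro ⟨⟨x, y⟩, ⟨⟨hx0, hx1⟩, hy0, hy1⟩, rfl⟩
    constructor
    · rw [neg_div, intercept]
      nlinarith
    · rw [intercept]
      nlinarith
  · rintro ⟨h1, h2⟩
    rw [neg_div] at h1
    have hm1 : (0 : ℝ) < 1 + (M : ℝ) / N := by linarith
    -- the point with intercept t on the segment from (1, 0) to (0, 1)
    refine ⟨((1 - t) / (1 + (M : ℝ) / N), (t + (M : ℝ) / N) / (1 + (M : ℝ) / N)),
      ⟨⟨?_, ?_⟩, ?_, ?_⟩, ?_⟩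
    · apply div_nonneg _ hm1.le; linarith
    · rw [div_le_one hm1]; linarith
    · apply div_nonneg _ hm1.le; linarith
    · rw [div_le_one hm1]; linarith
    · rw [intercept]
      field_simp
      ring

theorem semiconj_intercept_Phi (M N : ℕ) (b : Bool) (d : ℤ × ℤ) :
    Semiconj (intercept M N) (Phi b d) (Smap M N b d) := fun p => by
  have hr := (ratioB_pos b).ne'
  simp only [intercept, Phi, Smap]
  field_simp
  ring

theorem semiconj_intercept_PhiComp (M N : ℕ) (σ : ℕ → Bool) {n : ℕ} (w : Fin n → ℤ × ℤ) :
    Semiconj (intercept M N) (PhiComp σ w) (Scomp M N σ w) :=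
  List.semiconj_foldr_comp_ofFn _ _ fun _ => semiconj_intercept_Phi M N _ _

theorem Smap_strictMono (M N : ℕ) (b : Bool) (d : ℤ × ℤ) : StrictMono (Smap M N b d) :=
  fun x y h => by
    have hr := ratioB_pos b
    simp only [Smap]
    gcongr

theorem Smap_continuous (M N : ℕ) (b : Bool) (d : ℤ × ℤ) : Continuous (Smap M N b d) := by
  unfold Smap
  fun_prop

theorem Scomp_strictMono_continuous (M N : ℕ) (σ : ℕ → Bool) {n : ℕ} (w : Fin n → ℤ × ℤ) :
    StrictMono (Scomp M N σ w) ∧ Continuous (Scomp M N σ w) :=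
  List.foldr_comp_ofFn_induction (fun f => StrictMono f ∧ Continuous f)
    ⟨strictMono_id, continuous_id⟩ (fun _ _ hf hg => ⟨hf.1.comp hg.1, hf.2.comp hg.2⟩) _
    fun _ => ⟨Smap_strictMono M N _ _, Smap_continuous M N _ _⟩

theorem Scomp_image_Jset (M N : ℕ) (σ : ℕ → Bool) {n : ℕ} (w : Fin n → ℤ × ℤ) :
    Scomp M N σ w '' Jset M N = Set.Icc (Scomp M N σ w (-(M : ℝ) / N)) (Scomp M N σ w 1) :=
  (Scomp_strictMono_continuous M N σ w).2.image_Icc_of_strictMono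
    (Scomp_strictMono_continuous M N σ w).1

theorem stmt4_general (σ : ℕ → Bool) (M N : ℕ)
    (n : ℕ) (w : Fin n → ℤ × ℤ) (a : ℝ) :
    (PhiComp σ w ((1 : ℝ), (0 : ℝ))).2 -
        (M : ℝ) / (N : ℝ) * (PhiComp σ w ((1 : ℝ), (0 : ℝ))).1 =
      Scomp M N σ w (-(M : ℝ) / (N : ℝ)) ∧
    (PhiComp σ w ((0 : ℝ), (1 : ℝ))).2 -
        (M : ℝ) / (N : ℝ) * (PhiComp σ w ((0 : ℝ), (1 : ℝ))).1 =
      Scomp M N σ w 1 ∧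
    Scomp M N σ w '' Jset M N =
      Set.Icc
        ((PhiComp σ w ((1 : ℝ), (0 : ℝ))).2 -
          (M : ℝ) / (N : ℝ) * (PhiComp σ w ((1 : ℝ), (0 : ℝ))).1)
        ((PhiComp σ w ((0 : ℝ), (1 : ℝ))).2 -
          (M : ℝ) / (N : ℝ) * (PhiComp σ w ((0 : ℝ), (1 : ℝ))).1) ∧
    ((PhiComp σ w '' F0set ∩ Lline M N a).Nonempty ↔ a ∈ Scomp M N σ w '' Jset M N) := by
  have hconj := semiconj_intercept_PhiComp M N σ w
  have h_corner₁ : intercept M N (PhiComp σ w (1, 0)) = Scomp M N σ w (-(M : ℝ) / N) := by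
    rw [hconj.eq, intercept]
    congr 1
    ring
  have h_corner₂ : intercept M N (PhiComp σ w (0, 1)) = Scomp M N σ w 1 := by
    rw [hconj.eq, intercept]
    congr 1
    ring
  refine ⟨h_corner₁, h_corner₂, ?_, ?_⟩
  · exact (Scomp_image_Jset M N σ w).trans (congrArg₂ Set.Icc h_corner₁ h_corner₂).symm
  · rw [inter_Lline_nonempty_iff, hconj.set_image, intercept_image_F0set]

/-- corner projections and the intersection criterion for a level-n square. -/
theorem stmt4 (σ : ℕ → Bool) (M N : ℕ) (hN : 1 ≤ N) (hMN : Nat.Coprime M N)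
    (n : ℕ) (hn : 1 ≤ n) (w : Fin n → ℤ × ℤ) (hw : ∀ i, w i ∈ DigB (σ i.1)) (a : ℝ) :
    (PhiComp σ w ((1 : ℝ), (0 : ℝ))).2 -
        (M : ℝ) / (N : ℝ) * (PhiComp σ w ((1 : ℝ), (0 : ℝ))).1 =
      Scomp M N σ w (-(M : ℝ) / (N : ℝ)) ∧
    (PhiComp σ w ((0 : ℝ), (1 : ℝ))).2 -
        (M : ℝ) / (N : ℝ) * (PhiComp σ w ((0 : ℝ), (1 : ℝ))).1 =
      Scomp M N σ w 1 ∧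
    Scomp M N σ w '' Jset M N =
      Set.Icc
        ((PhiComp σ w ((1 : ℝ), (0 : ℝ))).2 -
          (M : ℝ) / (N : ℝ) * (PhiComp σ w ((1 : ℝ), (0 : ℝ))).1)
        ((PhiComp σ w ((0 : ℝ), (1 : ℝ))).2 -
          (M : ℝ) / (N : ℝ) * (PhiComp σ w ((0 : ℝ), (1 : ℝ))).1) ∧
    ((PhiComp σ w '' F0set ∩ Lline M N a).Nonempty ↔ a ∈ Scomp M N σ w '' Jset M N) :=
  stmt4_general σ M N n w a
end
end

section
/- Assume the frequencies n₀ = lim_{k→∞} n₀(k)/k and n₁ = lim_{k→∞} n₁(k)/k exist. For every α ∈ ℝ, dim_H(E(α)) ≤ dim_H({x ∈ Σ_σ : λ_A(x) exists and equals α·(n₀·log 3 + n₁·log 4)}). -/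
open Set Filter

noncomputable section

/-
A point `a ∈ E(α)` is the image of its greedy digit sequence `ξ` under the coding map
`ξ ↦ (-M-1+κ)/N + (1/N) Σ ξ_i / (3^{n₀(i+1)} 4^{n₁(i+1)})`. Two sequences agreeing on their first
`m` digits have images at distance `O(3^{-n₀(m+1)} 4^{-n₁(m+1)})`, which is their distance in
`Σ_σ`, so each coding map (one for each `κ`) is Lipschitz and does not increase Hausdorff
dimension. Since `n₀(k)/k` and `n₁(k)/k` converge, normalising `log ‖A_ξ|k‖` by
`n₀(k) log 3 + n₁(k) log 4` rather than by `k` only multiplies the limit by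
`n₀ log 3 + n₁ log 4`, so the digit sequence of every point of `E(α)` lies in the Lyapunov
level set. Countable stability of `dimH` over `κ` concludes.
-/

lemma cnt_succ (σ : ℕ → Bool) (b : Bool) (k : ℕ) :
    cnt σ b (k + 1) = cnt σ b k + if σ k = b then 1 else 0 := by
  unfold cnt
  rw [Finset.range_add_one, Finset.filter_insert]
  split
  · rw [Finset.card_insert_of_notMem (by simp)]
  · simp

lemma cnt_false_add_cnt_true (σ : ℕ → Bool) (k : ℕ) : cnt σ false k + cnt σ true k = k := by
  have h := Finset.card_filter_add_card_filter_not (s := Finset.range k) (p := fun i => σ i = false)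
  simpa [cnt] using h

lemma sc_pos (σ : ℕ → Bool) (k : ℕ) : 0 < sc σ k := by
  unfold sc; positivity

lemma sc_succ (σ : ℕ → Bool) (k : ℕ) : sc σ (k + 1) = sc σ k * ratioB (σ k) := by
  cases h : σ k <;> simp [sc, cnt_succ, h, ratioB, pow_succ] <;> ring

lemma sc_mul_three_pow_le (σ : ℕ → Bool) (m j : ℕ) : sc σ m * 3 ^ j ≤ sc σ (m + j) := by
  induction j with
  | zero => simp
  | succ j ih =>
    have h3 : 3 ≤ ratioB (σ (m + j)) := by cases σ (m + j) <;> norm_num [ratioB]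
    calc sc σ m * 3 ^ (j + 1) = sc σ m * 3 ^ j * 3 := by ring
      _ ≤ sc σ (m + j) * ratioB (σ (m + j)) := by
        gcongr
        exact (sc_pos σ _).le
      _ = sc σ (m + j + 1) := (sc_succ σ _).symm

lemma abs_div_sc_le (σ : ℕ → Bool) {a B : ℝ} (ha : |a| ≤ B) (m j : ℕ) :
    |a / sc σ (j + m + 1)| ≤ B / sc σ (m + 1) * (1 / 3) ^ j := by
  have hsc : sc σ (m + 1) * 3 ^ j ≤ sc σ (j + m + 1) := by
    simpa only [show m + 1 + j = j + m + 1 by omega] using sc_mul_three_pow_le σ (m + 1) j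
  have hB : 0 ≤ B := (abs_nonneg a).trans ha
  rw [abs_div, abs_of_pos (sc_pos σ _), div_pow, one_pow, div_mul_div_comm, mul_one]
  exact div_le_div₀ hB ha (mul_pos (sc_pos σ _) (by positivity)) hsc

def digitSeries (σ : ℕ → Bool) (ξ : ℕ → ℕ) : ℝ := ∑' i, (ξ i : ℝ) / sc σ (i + 1)

section DigitSeries

variable (σ : ℕ → Bool) {B : ℕ}

lemma summable_digit_div_sc {ξ : ℕ → ℕ} (hξ : ∀ i, ξ i ≤ B) :
    Summable fun i => (ξ i : ℝ) / sc σ (i + 1) := by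
  refine Summable.of_norm_bounded
    ((summable_geometric_of_lt_one (r := 1 / 3) (by norm_num) (by norm_num)).mul_left
      ((B : ℝ) / sc σ 1))
    fun i => ?_
  have hi : |(ξ i : ℝ)| ≤ B := by rw [Nat.abs_cast]; exact_mod_cast hξ i
  simpa only [Real.norm_eq_abs, zero_add] using abs_div_sc_le σ hi 0 i

lemma abs_digitSeries_sub_le {ξ η : ℕ → ℕ} (hξ : ∀ i, ξ i ≤ B) (hη : ∀ i, η i ≤ B) {m : ℕ}
    (hagree : ∀ i < m, ξ i = η i) :
    |digitSeries σ ξ - digitSeries σ η| ≤ 3 * B / 2 * (sc σ (m + 1))⁻¹ := by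
  set t : ℕ → ℝ := fun i => ((ξ i : ℝ) - η i) / sc σ (i + 1)
  have ht : Summable t := by
    simpa only [t, sub_div] using
      (summable_digit_div_sc σ hξ).sub (summable_digit_div_sc σ hη)
  have hhead : ∑ i ∈ Finset.range m, t i = 0 :=
    Finset.sum_eq_zero fun i hi => by simp [t, hagree i (Finset.mem_range.mp hi)]
  have htail : ∀ j, |t (j + m)| ≤ B / sc σ (m + 1) * (1 / 3) ^ j := fun j =>
    abs_div_sc_le σ (abs_sub_le_of_nonneg_of_le (Nat.cast_nonneg _)
      (by exact_mod_cast hξ _) (Nat.cast_nonneg _) (by exact_mod_cast hη _)) m j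
  have hgeom : Summable fun j : ℕ => B / sc σ (m + 1) * (1 / 3 : ℝ) ^ j :=
    (summable_geometric_of_lt_one (by norm_num) (by norm_num)).mul_left _
  have hdiff : digitSeries σ ξ - digitSeries σ η = ∑' i, t i := by
    rw [digitSeries, digitSeries, ← Summable.tsum_sub (summable_digit_div_sc σ hξ)
      (summable_digit_div_sc σ hη)]
    simp only [t, sub_div]
  rw [hdiff, ← ht.sum_add_tsum_nat_add m, hhead, zero_add, ← Real.norm_eq_abs]
  calc ‖∑' j, t (j + m)‖
      ≤ ∑' j : ℕ, B / sc σ (m + 1) * (1 / 3 : ℝ) ^ j :=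
        tsum_of_norm_bounded hgeom.hasSum fun j => (Real.norm_eq_abs _).trans_le (htail j)
    _ = 3 * B / 2 * (sc σ (m + 1))⁻¹ := by
        rw [tsum_mul_left, tsum_geometric_of_lt_one (by norm_num) (by norm_num)]
        ring

lemma lipschitzWith_digitSeries {X : Type*} [MetricSpace X] (e : X → ℕ → ℕ)
    (he : ∀ x i, e x i ≤ B)
    (hdist : ∀ x y : X, x ≠ y → dist x y = (sc σ (sInf {i : ℕ | e x i ≠ e y i} + 1))⁻¹) :
    LipschitzWith (3 * B / 2) fun x => digitSeries σ (e x) := by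
  refine LipschitzWith.of_dist_le_mul fun x y => ?_
  rcases eq_or_ne x y with rfl | hxy
  · simp
  have hagree : ∀ i < sInf {i : ℕ | e x i ≠ e y i}, e x i = e y i := fun i hi =>
    not_not.mp (Nat.notMem_of_lt_sInf hi)
  rw [hdist x y hxy, Real.dist_eq]
  push_cast
  exact abs_digitSeries_sub_le σ (he x) (he y) hagree

end DigitSeries

lemma tendsto_div_of_tendsto_div_mul {α : Type*} {l : Filter α} {u v w : α → ℝ} {a b : ℝ}
    (huv : Tendsto (fun k => u k / v k) l (nhds a)) (hvw : Tendsto (fun k => v k / w k) l (nhds b))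
    (hv : ∀ᶠ k in l, v k ≠ 0) :
    Tendsto (fun k => u k / w k) l (nhds (a * b)) :=
  (huv.mul hvw).congr' <| hv.mono fun _ hk => div_mul_div_cancel₀ hk

lemma cnt_log_pos (σ : ℕ → Bool) {k : ℕ} (hk : 1 ≤ k) :
    0 < (cnt σ false k : ℝ) * Real.log 3 + (cnt σ true k : ℝ) * Real.log 4 := by
  have hsum : (cnt σ false k : ℝ) + cnt σ true k = k := by
    exact_mod_cast cnt_false_add_cnt_true σ k
  have hk' : (1 : ℝ) ≤ k := by exact_mod_cast hk
  have l3 : 0 < Real.log 3 := Real.log_pos (by norm_num)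
  have l34 : Real.log 3 ≤ Real.log 4 := Real.log_le_log (by norm_num) (by norm_num)
  nlinarith [(Nat.cast_nonneg (cnt σ false k) : (0 : ℝ) ≤ _),
    (Nat.cast_nonneg (cnt σ true k) : (0 : ℝ) ≤ _)]

lemma tendsto_lyapunov_of_tendsto (σ : ℕ → Bool) {n₀ n₁ α : ℝ} {L : ℕ → ℝ}
    (h0 : Tendsto (fun k : ℕ => (cnt σ false k : ℝ) / (k : ℝ)) atTop (nhds n₀))
    (h1 : Tendsto (fun k : ℕ => (cnt σ true k : ℝ) / (k : ℝ)) atTop (nhds n₁))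
    (hL : Tendsto (fun k : ℕ => L k /
      ((cnt σ false k : ℝ) * Real.log 3 + (cnt σ true k : ℝ) * Real.log 4)) atTop (nhds α)) :
    Tendsto (fun k : ℕ => L k / (k : ℝ)) atTop
      (nhds (α * (n₀ * Real.log 3 + n₁ * Real.log 4))) := by
  refine tendsto_div_of_tendsto_div_mul hL ?_
    ((eventually_ge_atTop 1).mono fun k hk => (cnt_log_pos σ hk).ne')
  refine ((h0.mul_const (Real.log 3)).add (h1.mul_const (Real.log 4))).congr fun k => ?_
  ring

lemma LipschitzWith.const_add_mul {X : Type*} [PseudoMetricSpace X] {K : NNReal} {s : X → ℝ}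
    (hs : LipschitzWith K s) (c r : ℝ) :
    LipschitzWith (‖r‖₊ * K) fun x => c + r * s x := by
  refine LipschitzWith.of_dist_le_mul fun x y => ?_
  rw [Real.dist_eq, add_sub_add_left_eq_sub, ← mul_sub, abs_mul, ← Real.dist_eq]
  push_cast
  rw [mul_assoc, Real.norm_eq_abs]
  exact mul_le_mul_of_nonneg_left (hs.dist_le_mul x y) (abs_nonneg r)

theorem stmt15_general (σ : ℕ → Bool) (M N : ℕ)
    (n₀ n₁ : ℝ)
    (h0 : Tendsto (fun k : ℕ => (cnt σ false k : ℝ) / (k : ℝ)) atTop (nhds n₀))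
    (h1 : Tendsto (fun k : ℕ => (cnt σ true k : ℝ) / (k : ℝ)) atTop (nhds n₁))
    (X : Type) [MetricSpace X] (e : X → ℕ → ℕ)
    (hrange : Set.range e = {x : ℕ → ℕ | ∀ i, x i ≤ capB (σ i)})
    (hdist : ∀ x y : X, x ≠ y →
      dist x y = (sc σ (sInf {i : ℕ | e x i ≠ e y i} + 1))⁻¹)
    (α : ℝ) :
    dimH (Eset M N σ α) ≤
      dimH {x : X | Tendsto (fun k : ℕ => Real.log (mnorm (Aprod M N σ (e x) k)) / (k : ℝ))
        atTop (nhds (α * (n₀ * Real.log 3 + n₁ * Real.log 4)))} := by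
  set LS := {x : X | Tendsto (fun k : ℕ => Real.log (mnorm (Aprod M N σ (e x) k)) / (k : ℝ))
    atTop (nhds (α * (n₀ * Real.log 3 + n₁ * Real.log 4)))}
  set code : ℕ → X → ℝ := fun κ x =>
    (-(M : ℝ) - 1 + κ) / N + 1 / N * digitSeries σ (e x)
  have he : ∀ x i, e x i ≤ 3 := fun x i => by
    have hx : e x ∈ Set.range e := ⟨x, rfl⟩
    rw [hrange] at hx
    exact (hx i).trans (by cases σ i <;> decide)
  have hsub : Eset M N σ α ⊆ ⋃ κ, code κ '' LS := by
    rintro a ⟨-, -, κ, -, ξ, hξ, rfl, hL⟩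
    obtain ⟨x, rfl⟩ : ξ ∈ Set.range e := hrange ▸ hξ
    exact mem_iUnion.2 ⟨κ, x, tendsto_lyapunov_of_tendsto σ h0 h1 hL, rfl⟩
  calc dimH (Eset M N σ α) ≤ dimH (⋃ κ, code κ '' LS) := dimH_mono hsub
    _ = ⨆ κ, dimH (code κ '' LS) := dimH_iUnion _
    _ ≤ dimH LS := iSup_le fun κ =>
      ((lipschitzWith_digitSeries σ e he hdist).const_add_mul _ _).dimH_image_le LS

/-- dim_H E(α) is at most the dimension of the corresponding Lyapunov level set
in the symbolic space Σ_σ (represented by an abstract metric space X with coding map e). -/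
theorem stmt15 (σ : ℕ → Bool) (M N : ℕ) (hN : 1 ≤ N) (hMN : Nat.Coprime M N)
    (n₀ n₁ : ℝ)
    (h0 : Tendsto (fun k : ℕ => (cnt σ false k : ℝ) / (k : ℝ)) atTop (nhds n₀))
    (h1 : Tendsto (fun k : ℕ => (cnt σ true k : ℝ) / (k : ℝ)) atTop (nhds n₁))
    (X : Type) [MetricSpace X] (e : X → ℕ → ℕ)
    (hinj : Function.Injective e)
    (hrange : Set.range e = {x : ℕ → ℕ | ∀ i, x i ≤ capB (σ i)})
    (hdist : ∀ x y : X, x ≠ y →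
      dist x y = (sc σ (sInf {i : ℕ | e x i ≠ e y i} + 1))⁻¹)
    (α : ℝ) :
    dimH (Eset M N σ α) ≤
      dimH {x : X | Tendsto (fun k : ℕ => Real.log (mnorm (Aprod M N σ (e x) k)) / (k : ℝ))
        atTop (nhds (α * (n₀ * Real.log 3 + n₁ * Real.log 4)))} :=
  stmt15_general σ M N n₀ n₁ h0 h1 X e hrange hdist α
end
end
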